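/- arXiv:2604.21423 — 2 statements merged into one kernel-verified Lean document; each statement's English description precedes it below -/
import Mathlib

section
/- In the setting of mixed-logit demand with log-normal mixing (q_j(p) = M ∫₀^∞ σ_j(p, α) f(α) dα, with σ_j the logit choice probability and f the log-normal density with parameters μ, σ > 0), q_j is differentiable in p_j on ℝ_{++}^J with ∂_{p_j} q_j(p) = −M ∫₀^∞ α σ_j(p,α)(1 − σ_j(p,α)) f(α) dα, and for each fixed ray p ∈ ℝ_{++}^J, (−∂_{p_j} q_j(λ p)) / (M e^{δ_j} (−L'(λ p_j))) → 1 as λ → ∞, where L is the log-normal Laplace transform. -/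
/-!
Differentiation under the integral sign works because the own-price derivative of the logit
share, `-α s (1 - s)`, is bounded by `e^{δ_j} / p_j` uniformly in `α`, while the log-normal
density `f` is integrable (under `α = e^y` it becomes a Gaussian density).

Write `I(x) = -L'(x) = ∫ α e^{-αx} f(α) dα`. Since `s (1 - s) ≤ s ≤ e^{δ_j - α p_j}`, the ratio
along the ray is at most `1`. Conversely, once `αλ ≥ T` every `e^{δ_i - αλ p_i}` is at most
`e^{δ_i - T p_i}`, so `s (1 - s) ≥ e^{δ_j - αλ p_j} / (1 + S_T)²` with
`S_T = ∑ᵢ e^{δ_i - T p_i} → 0` as `T → ∞`; the only loss is the part of `I(x)`, `x = λ p_j`,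
coming from `α ≤ c = T p_j / x`. That part is negligible: `g(α) = α f(α)` increases on
`(0, e^μ]`, so the part is at most `c g(c)`, whereas `I(x) ≥ 2c e^{-4cx} g(2c)`, and
`g(c) / g(2c) = exp (log 2 (2 (log c - μ) + log 2) / (2σ²)) → 0` as `c → 0`.
-/

open MeasureTheory Real Filter

/-- Density of the log-normal distribution with parameters `μ` and `σ` on `(0, ∞)`. -/
noncomputable def lognormalPdf (μ σ : ℝ) (α : ℝ) : ℝ :=
  (1 / (α * σ * Real.sqrt (2 * Real.pi))) * Real.exp (-(Real.log α - μ) ^ 2 / (2 * σ ^ 2))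

/-- Laplace transform of the log-normal distribution. -/
noncomputable def lnLaplace (μ σ : ℝ) (x : ℝ) : ℝ :=
  ∫ α in Set.Ioi (0 : ℝ), Real.exp (-α * x) * lognormalPdf μ σ α

/-- Logit choice probability of product `j` at prices `p`, mean utilities `δ`,
and price coefficient `α`. -/
noncomputable def logitShare {J : ℕ} (δ : Fin J → ℝ) (j : Fin J) (p : Fin J → ℝ) (α : ℝ) : ℝ :=
  Real.exp (δ j - α * p j) / (1 + ∑ l, Real.exp (δ l - α * p l))

/-- Mixed-logit demand for product `j` with log-normal mixing over the price coefficient. -/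
noncomputable def qLN {J : ℕ} (δ : Fin J → ℝ) (M μ σ : ℝ) (j : Fin J) (p : Fin J → ℝ) : ℝ :=
  M * ∫ α in Set.Ioi (0 : ℝ), logitShare δ j p α * lognormalPdf μ σ α

/-- Partial derivative of `F : (Fin J → ℝ) → ℝ` in the `k`-th coordinate at `p`. -/
noncomputable def pd {J : ℕ} (F : (Fin J → ℝ) → ℝ) (k : Fin J) (p : Fin J → ℝ) : ℝ :=
  deriv (fun t => F (Function.update p k t)) (p k)

open Set Topology

theorem mul_exp_neg_mul_le_inv {α x : ℝ} (hx : 0 < x) : α * exp (-α * x) ≤ x⁻¹ :=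
  calc α * exp (-α * x) = α * x * exp (-(α * x)) / x := by field_simp
    _ ≤ exp (-1) / x := by gcongr; exact mul_exp_neg_le_exp_neg_one _
    _ ≤ x⁻¹ := by rw [inv_eq_one_div]; gcongr; exact exp_le_one_iff.2 (by norm_num)

theorem hasDerivAt_integral_mul_of_norm_deriv_le {X : Type*} [MeasurableSpace X] {ν : Measure X}
    {g : X → ℝ} (hg : Integrable g ν) {h h' : ℝ → X → ℝ} {x ε B C : ℝ} (hε : 0 < ε)
    (hmeas : ∀ t, AEStronglyMeasurable (h t) ν) (hmeas' : AEStronglyMeasurable (h' x) ν)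
    (hbdd : ∀ᵐ a ∂ν, ‖h x a‖ ≤ B)
    (hderiv : ∀ᵐ a ∂ν, ∀ t ∈ Metric.ball x ε, HasDerivAt (h · a) (h' t a) t)
    (hderiv_le : ∀ᵐ a ∂ν, ∀ t ∈ Metric.ball x ε, ‖h' t a‖ ≤ C) :
    HasDerivAt (fun t => ∫ a, h t a * g a ∂ν) (∫ a, h' x a * g a ∂ν) x := by
  refine (hasDerivAt_integral_of_dominated_loc_of_deriv_le (F := fun t a => h t a * g a)
    (F' := fun t a => h' t a * g a) (Metric.ball_mem_nhds x hε)
    (.of_forall fun t => (hmeas t).mul hg.1) (hg.bdd_mul (hmeas x) hbdd) (hmeas'.mul hg.1)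
    (bound := fun a => C * ‖g a‖) ?_ (hg.norm.const_mul C) ?_).2
  · filter_upwards [hderiv_le] with a ha t ht
    rw [norm_mul]
    exact mul_le_mul_of_nonneg_right (ha t ht) (norm_nonneg _)
  · filter_upwards [hderiv] with a ha t ht
    exact (ha t ht).mul_const (g a)

theorem tendsto_of_le_of_forall_mul_le {ι κ : Type*} {F : Filter ι} [F.NeBot] {G : Filter κ}
    {r : κ → ℝ} {a : ι → ℝ} {b : ι → κ → ℝ} {y : ℝ} (hup : ∀ᶠ l in G, r l ≤ y)
    (ha : Tendsto a F (𝓝 1)) (hb : ∀ᶠ T in F, Tendsto (b T) G (𝓝 y))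
    (hlow : ∀ᶠ T in F, ∀ᶠ l in G, a T * b T l ≤ r l) : Tendsto r G (𝓝 y) := by
  refine tendsto_order.2 ⟨fun y' hy' => ?_, fun y' hy' => hup.mono fun l hl => hl.trans_lt hy'⟩
  have hay : Tendsto (fun T => a T * y) F (𝓝 y) := by simpa using ha.mul_const y
  obtain ⟨T, hT, hbT, hlowT⟩ := ((hay.eventually (lt_mem_nhds hy')).and (hb.and hlow)).exists
  filter_upwards [(hbT.const_mul (a T)).eventually (lt_mem_nhds hT), hlowT] with l h1 h2
  exact h1.trans_le h2

section LogNormal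

variable {μ σ : ℝ}

theorem mul_lognormalPdf_eq {α : ℝ} (hα : α ≠ 0) :
    α * lognormalPdf μ σ α = exp (-(log α - μ) ^ 2 / (2 * σ ^ 2)) / (σ * √(2 * π)) := by
  rw [lognormalPdf]
  field_simp

theorem lognormalPdf_nonneg (hσ : 0 < σ) {α : ℝ} (hα : 0 < α) : 0 ≤ lognormalPdf μ σ α := by
  unfold lognormalPdf
  positivity

theorem mul_lognormalPdf_pos (hσ : 0 < σ) {α : ℝ} (hα : 0 < α) : 0 < α * lognormalPdf μ σ α := by
  rw [mul_lognormalPdf_eq hα.ne']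
  positivity

theorem integrableOn_lognormalPdf (hσ : 0 < σ) : IntegrableOn (lognormalPdf μ σ) (Ioi 0) := by
  rw [← range_exp, ← image_univ,
    integrableOn_image_iff_integrableOn_abs_deriv_smul MeasurableSet.univ
      (fun y _ => (hasDerivAt_exp y).hasDerivWithinAt) exp_injective.injOn]
  refine (ProbabilityTheory.integrable_gaussianPDFReal μ (σ ^ 2).toNNReal).integrableOn.congr_fun
    (fun y _ => ?_) MeasurableSet.univ
  rw [smul_eq_mul, abs_of_pos (exp_pos y), mul_lognormalPdf_eq (exp_pos y).ne', log_exp,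
    ProbabilityTheory.gaussianPDFReal, Real.coe_toNNReal _ (sq_nonneg σ),
    show 2 * π * σ ^ 2 = σ ^ 2 * (2 * π) by ring, Real.sqrt_mul (sq_nonneg σ), Real.sqrt_sq hσ.le]
  ring

theorem integrableOn_mul_lognormalPdf (hσ : 0 < σ) {h : ℝ → ℝ} (hh : Measurable h) {C : ℝ}
    (hC : ∀ α, 0 < α → |h α| ≤ C) : IntegrableOn (fun α => h α * lognormalPdf μ σ α) (Ioi 0) :=
  (integrableOn_lognormalPdf hσ).bdd_mul hh.aestronglyMeasurable <| by
    filter_upwards [ae_restrict_mem measurableSet_Ioi] with α hα using hC α hα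

theorem mul_lognormalPdf_le_of_le (hσ : 0 < σ) {a b : ℝ} (ha : 0 < a) (hab : a ≤ b)
    (hb : log b ≤ μ) : a * lognormalPdf μ σ a ≤ b * lognormalPdf μ σ b := by
  rw [mul_lognormalPdf_eq ha.ne', mul_lognormalPdf_eq (ha.trans_le hab).ne']
  have hlog : log a ≤ log b := log_le_log ha hab
  gcongr exp (?_ / _) / _
  nlinarith

theorem mul_lognormalPdf_div_two_mul (hσ : 0 < σ) {c : ℝ} (hc : 0 < c) :
    c * lognormalPdf μ σ c / (2 * c * lognormalPdf μ σ (2 * c)) =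
      exp (log 2 * (2 * (log c - μ) + log 2) / (2 * σ ^ 2)) := by
  rw [mul_lognormalPdf_eq hc.ne', mul_lognormalPdf_eq (by positivity), div_div_div_cancel_right₀
    (by positivity), ← exp_sub, log_mul two_ne_zero hc.ne']
  ring_nf

theorem tendsto_mul_lognormalPdf_div_two_mul (hσ : 0 < σ) :
    Tendsto (fun c => c * lognormalPdf μ σ c / (2 * c * lognormalPdf μ σ (2 * c)))
      (𝓝[>] 0) (𝓝 0) := by
  have hlog2 : 0 < log 2 := log_pos one_lt_two
  have hexponent : Tendsto (fun c => log 2 * (2 * (log c - μ) + log 2) / (2 * σ ^ 2))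
      (𝓝[>] 0) atBot := by
    refine Tendsto.atBot_div_const (by positivity) (Tendsto.const_mul_atBot hlog2 ?_)
    refine tendsto_atBot_add_const_right _ _ (Tendsto.const_mul_atBot two_pos ?_)
    exact tendsto_atBot_add_const_right _ _ tendsto_log_nhdsGT_zero
  refine (tendsto_exp_atBot.comp hexponent).congr' ?_
  filter_upwards [self_mem_nhdsWithin] with c hc
  exact (mul_lognormalPdf_div_two_mul hσ hc).symm

end LogNormal

section Laplace

noncomputable def lnMomentLaplace (μ σ : ℝ) (s : Set ℝ) (x : ℝ) : ℝ :=
  ∫ α in s, α * exp (-α * x) * lognormalPdf μ σ α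

variable {μ σ : ℝ}

theorem integrableOn_lnMomentLaplace (hσ : 0 < σ) {x : ℝ} (hx : 0 < x) :
    IntegrableOn (fun α => α * exp (-α * x) * lognormalPdf μ σ α) (Ioi 0) :=
  integrableOn_mul_lognormalPdf hσ (by fun_prop) fun α hα => by
    rw [abs_of_nonneg (by positivity)]
    exact mul_exp_neg_mul_le_inv hx

theorem hasDerivAt_lnLaplace (hσ : 0 < σ) {x : ℝ} (hx : 0 < x) :
    HasDerivAt (lnLaplace μ σ) (-lnMomentLaplace μ σ (Ioi 0) x) x := by
  have key := hasDerivAt_integral_mul_of_norm_deriv_le (integrableOn_lognormalPdf (μ := μ) hσ)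
    (h := fun t α => exp (-α * t)) (h' := fun t α => -(α * exp (-α * t)))
    (x := x) (B := 1) (C := (x / 2)⁻¹) (half_pos hx) (fun t => by fun_prop) (by fun_prop)
    (by
      filter_upwards [ae_restrict_mem measurableSet_Ioi] with α (hα : 0 < α)
      rw [Real.norm_of_nonneg (exp_pos _).le, exp_le_one_iff]
      nlinarith)
    (.of_forall fun α t _ => by
      simpa [mul_comm] using ((hasDerivAt_id t).const_mul (-α)).exp)
    (by
      filter_upwards [ae_restrict_mem measurableSet_Ioi] with α (hα : 0 < α) t ht
      have ht' : x / 2 ≤ t := by rw [Real.ball_eq_Ioo] at ht; linarith [ht.1]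
      rw [norm_neg, Real.norm_of_nonneg (by positivity)]
      exact (mul_exp_neg_mul_le_inv (by linarith)).trans (inv_anti₀ (half_pos hx) ht'))
  exact key.congr_deriv (by simp [lnMomentLaplace, integral_neg])

theorem deriv_lnLaplace (hσ : 0 < σ) {x : ℝ} (hx : 0 < x) :
    deriv (lnLaplace μ σ) x = -lnMomentLaplace μ σ (Ioi 0) x :=
  (hasDerivAt_lnLaplace hσ hx).deriv

theorem lnMomentLaplace_Ioc_le (hσ : 0 < σ) {c x : ℝ} (hc : 0 < c) (hcμ : log c ≤ μ)
    (hx : 0 < x) : lnMomentLaplace μ σ (Ioc 0 c) x ≤ c * (c * lognormalPdf μ σ c) := by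
  calc lnMomentLaplace μ σ (Ioc 0 c) x ≤ ∫ _ in Ioc 0 c, c * lognormalPdf μ σ c := by
        refine setIntegral_mono_on ((integrableOn_lnMomentLaplace hσ hx).mono_set
          Ioc_subset_Ioi_self) (integrableOn_const measure_Ioc_lt_top.ne) measurableSet_Ioc
          fun α ⟨hα, hαc⟩ => ?_
        calc α * exp (-α * x) * lognormalPdf μ σ α ≤ α * 1 * lognormalPdf μ σ α := by
              gcongr
              · exact lognormalPdf_nonneg hσ hα
              · exact exp_le_one_iff.2 (by nlinarith)
          _ ≤ c * lognormalPdf μ σ c := by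
              rw [mul_one]; exact mul_lognormalPdf_le_of_le hσ hα hαc hcμ
    _ = c * (c * lognormalPdf μ σ c) := by
        rw [setIntegral_const, Real.volume_real_Ioc_of_le hc.le, sub_zero, smul_eq_mul]

theorem le_lnMomentLaplace (hσ : 0 < σ) {a b x : ℝ} (ha : 0 < a) (hab : a ≤ b)
    (hbμ : log b ≤ μ) (hx : 0 < x) :
    (b - a) * (exp (-b * x) * (a * lognormalPdf μ σ a)) ≤ lnMomentLaplace μ σ (Ioi 0) x := by
  have hint := integrableOn_lnMomentLaplace (μ := μ) hσ hx
  calc (b - a) * (exp (-b * x) * (a * lognormalPdf μ σ a))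
      = ∫ _ in Ioc a b, exp (-b * x) * (a * lognormalPdf μ σ a) := by
        rw [setIntegral_const, Real.volume_real_Ioc_of_le hab, smul_eq_mul]
    _ ≤ ∫ α in Ioc a b, α * exp (-α * x) * lognormalPdf μ σ α := by
        refine setIntegral_mono_on (integrableOn_const measure_Ioc_lt_top.ne)
          (hint.mono_set fun α hα => ha.trans hα.1) measurableSet_Ioc fun α ⟨haα, hαb⟩ => ?_
        rw [show α * exp (-α * x) * lognormalPdf μ σ α =
          exp (-α * x) * (α * lognormalPdf μ σ α) by ring]
        exact mul_le_mul (exp_le_exp.2 (by nlinarith))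
          (mul_lognormalPdf_le_of_le hσ ha haα.le ((log_le_log (ha.trans haα) hαb).trans hbμ))
          (mul_lognormalPdf_pos hσ ha).le (exp_pos _).le
    _ ≤ lnMomentLaplace μ σ (Ioi 0) x := by
        refine setIntegral_mono_set hint ?_
          (show Ioc a b ⊆ Ioi 0 from fun α hα => ha.trans hα.1).eventuallyLE
        filter_upwards [ae_restrict_mem measurableSet_Ioi] with α (hα : 0 < α)
        exact mul_nonneg (mul_nonneg hα.le (exp_pos _).le) (lognormalPdf_nonneg hσ hα)

theorem lnMomentLaplace_Ioi_sub_Ioc (hσ : 0 < σ) {c x : ℝ} (hc : 0 ≤ c) (hx : 0 < x) :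
    lnMomentLaplace μ σ (Ioi 0) x - lnMomentLaplace μ σ (Ioc 0 c) x =
      lnMomentLaplace μ σ (Ioi c) x := by
  have hint := integrableOn_lnMomentLaplace (μ := μ) hσ hx
  rw [lnMomentLaplace, lnMomentLaplace, ← Ioc_union_Ioi_eq_Ioi hc,
    setIntegral_union (Ioc_disjoint_Ioi le_rfl) measurableSet_Ioi
      (hint.mono_set Ioc_subset_Ioi_self) (hint.mono_set (Ioi_subset_Ioi hc)),
    add_sub_cancel_left, lnMomentLaplace]

theorem lnMomentLaplace_pos (hσ : 0 < σ) {x : ℝ} (hx : 0 < x) :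
    0 < lnMomentLaplace μ σ (Ioi 0) x := by
  have ha : 0 < exp μ / 2 := by positivity
  refine lt_of_lt_of_le ?_ (le_lnMomentLaplace hσ ha (half_le_self (exp_pos μ).le)
    (log_exp μ).le hx)
  exact mul_pos (by linarith) (mul_pos (exp_pos _) (mul_lognormalPdf_pos hσ ha))

theorem lnMomentLaplace_Ioc_div_le (hσ : 0 < σ) {T x : ℝ} (hT : 0 < T) (hx : 0 < x)
    (hμ : log (4 * T / x) ≤ μ) :
    lnMomentLaplace μ σ (Ioc 0 (T / x)) x / lnMomentLaplace μ σ (Ioi 0) x ≤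
      exp (4 * T) / 2 * (T / x * lognormalPdf μ σ (T / x) /
        (2 * (T / x) * lognormalPdf μ σ (2 * (T / x)))) := by
  set c := T / x
  have hc : 0 < c := div_pos hT hx
  have hcx : c * x = T := div_mul_cancel₀ T hx.ne'
  rw [mul_div_assoc] at hμ
  have hJ := lnMomentLaplace_Ioc_le hσ hc ((log_le_log hc (by linarith)).trans hμ) hx
  have hI := le_lnMomentLaplace hσ (a := 2 * c) (b := 4 * c) (by positivity) (by linarith) hμ hx
  rw [show 4 * c - 2 * c = 2 * c by ring] at hI
  have hpos := mul_lognormalPdf_pos (μ := μ) hσ (by positivity : 0 < 2 * c)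
  have hpos' := mul_lognormalPdf_pos (μ := μ) hσ hc
  calc lnMomentLaplace μ σ (Ioc 0 c) x / lnMomentLaplace μ σ (Ioi 0) x
      ≤ c * (c * lognormalPdf μ σ c) /
          (2 * c * (exp (-(4 * c) * x) * (2 * c * lognormalPdf μ σ (2 * c)))) :=
        div_le_div₀ (by positivity) hJ (by positivity) hI
    _ = exp (4 * T) / 2 * (c * lognormalPdf μ σ c / (2 * c * lognormalPdf μ σ (2 * c))) := by
        rw [show -(4 * c) * x = -(4 * T) by rw [← hcx]; ring, exp_neg]
        field_simp

theorem tendsto_lnMomentLaplace_Ioc_div (hσ : 0 < σ) {T : ℝ} (hT : 0 < T) :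
    Tendsto (fun x => lnMomentLaplace μ σ (Ioc 0 (T / x)) x / lnMomentLaplace μ σ (Ioi 0) x)
      atTop (𝓝 0) := by
  have hdiv : ∀ C : ℝ, Tendsto (fun x : ℝ => C / x) atTop (𝓝 0) := fun C =>
    tendsto_const_nhds.div_atTop tendsto_id
  have hc : Tendsto (fun x => T / x) atTop (𝓝[>] 0) := tendsto_nhdsWithin_iff.2
    ⟨hdiv T, (eventually_gt_atTop 0).mono fun x hx => div_pos hT hx⟩
  have hbound := ((tendsto_mul_lognormalPdf_div_two_mul (μ := μ) hσ).comp hc).const_mul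
    (exp (4 * T) / 2)
  rw [mul_zero] at hbound
  refine tendsto_of_tendsto_of_tendsto_of_le_of_le' tendsto_const_nhds hbound ?_ ?_
  · filter_upwards [eventually_gt_atTop 0] with x hx
    refine div_nonneg (setIntegral_nonneg measurableSet_Ioc fun α hα => ?_)
      (lnMomentLaplace_pos hσ hx).le
    exact mul_nonneg (mul_nonneg hα.1.le (exp_pos _).le) (lognormalPdf_nonneg hσ hα.1)
  · filter_upwards [eventually_gt_atTop 0, (hdiv (4 * T)).eventually (ge_mem_nhds (exp_pos μ))]
      with x hx hxμ
    exact lnMomentLaplace_Ioc_div_le hσ hT hx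
      ((log_le_log (by positivity) hxμ).trans_eq (log_exp μ))

theorem tendsto_lnMomentLaplace_Ioc_div_mul (hσ : 0 < σ) {T c : ℝ} (hT : 0 < T) (hc : 0 < c) :
    Tendsto (fun l => lnMomentLaplace μ σ (Ioc 0 (T / l)) (l * c) /
      lnMomentLaplace μ σ (Ioi 0) (l * c)) atTop (𝓝 0) := by
  refine ((tendsto_lnMomentLaplace_Ioc_div (μ := μ) hσ (mul_pos hT hc)).comp
    (tendsto_id.atTop_mul_const hc)).congr' ?_
  filter_upwards [eventually_gt_atTop 0] with l hl
  simp only [Function.comp_apply, id, mul_div_mul_right _ _ hc.ne']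

end Laplace

section Logit

variable {J : ℕ}

noncomputable def expUtilitySum (δ : Fin J → ℝ) (p : Fin J → ℝ) (α : ℝ) : ℝ :=
  ∑ l, exp (δ l - α * p l)

variable {δ : Fin J → ℝ}

theorem expUtilitySum_nonneg (p : Fin J → ℝ) (α : ℝ) : 0 ≤ expUtilitySum δ p α :=
  Finset.sum_nonneg fun _ _ => (exp_pos _).le

theorem one_add_expUtilitySum_pos (p : Fin J → ℝ) (α : ℝ) : 0 < 1 + expUtilitySum δ p α := by
  linarith [expUtilitySum_nonneg (δ := δ) p α]

theorem exp_le_expUtilitySum (j : Fin J) (p : Fin J → ℝ) (α : ℝ) :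
    exp (δ j - α * p j) ≤ expUtilitySum δ p α :=
  Finset.single_le_sum (f := fun l => exp (δ l - α * p l)) (fun _ _ => (exp_pos _).le)
    (Finset.mem_univ j)

theorem expUtilitySum_smul (l : ℝ) (p : Fin J → ℝ) (α : ℝ) :
    expUtilitySum δ (l • p) α = expUtilitySum δ p (α * l) := by
  simp only [expUtilitySum, Pi.smul_apply, smul_eq_mul, mul_assoc]

theorem expUtilitySum_antitone {p : Fin J → ℝ} (hp : ∀ i, 0 ≤ p i) :
    Antitone (expUtilitySum δ p) := fun a b hab =>
  Finset.sum_le_sum fun i _ => exp_le_exp.2 (by nlinarith [hp i])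

theorem tendsto_expUtilitySum_atTop {p : Fin J → ℝ} (hp : ∀ i, 0 < p i) :
    Tendsto (expUtilitySum δ p) atTop (𝓝 0) := by
  rw [show (0 : ℝ) = ∑ _i : Fin J, 0 by simp]
  refine tendsto_finsetSum _ fun i _ => tendsto_exp_atBot.comp ?_
  exact tendsto_atBot_add_const_left _ _ (tendsto_neg_atTop_atBot.comp
    (tendsto_id.atTop_mul_const (hp i)))

theorem expUtilitySum_update (j : Fin J) (p : Fin J → ℝ) (t α : ℝ) :
    expUtilitySum δ (Function.update p j t) α =
      exp (δ j - α * t) + ∑ l ∈ Finset.univ.erase j, exp (δ l - α * p l) := by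
  rw [expUtilitySum, ← Finset.add_sum_erase _ _ (Finset.mem_univ j), Function.update_self]
  congr 1
  refine Finset.sum_congr rfl fun l hl => ?_
  rw [Function.update_of_ne (Finset.ne_of_mem_erase hl)]

variable {j : Fin J} {p : Fin J → ℝ} {α : ℝ}

theorem logitShare_eq :
    logitShare δ j p α = exp (δ j - α * p j) / (1 + expUtilitySum δ p α) := rfl

theorem logitShare_nonneg : 0 ≤ logitShare δ j p α := by
  rw [logitShare_eq]
  exact div_nonneg (exp_pos _).le (one_add_expUtilitySum_pos p α).le

theorem logitShare_le_one : logitShare δ j p α ≤ 1 := by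
  rw [logitShare_eq, div_le_one (one_add_expUtilitySum_pos p α)]
  linarith [exp_le_expUtilitySum (δ := δ) j p α]

theorem logitShare_mul_one_sub_nonneg : 0 ≤ logitShare δ j p α * (1 - logitShare δ j p α) :=
  mul_nonneg logitShare_nonneg (sub_nonneg.2 logitShare_le_one)

theorem logitShare_mul_one_sub_le :
    logitShare δ j p α * (1 - logitShare δ j p α) ≤ exp (δ j - α * p j) := by
  have hs : logitShare δ j p α ≤ exp (δ j - α * p j) :=
    div_le_self (exp_pos _).le (le_add_of_nonneg_right (expUtilitySum_nonneg p α))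
  nlinarith [logitShare_nonneg (δ := δ) (j := j) (p := p) (α := α)]

theorem exp_div_sq_le_logitShare_mul_one_sub :
    exp (δ j - α * p j) / (1 + expUtilitySum δ p α) ^ 2 ≤
      logitShare δ j p α * (1 - logitShare δ j p α) := by
  have hD := exp_le_expUtilitySum (δ := δ) j p α
  have hpos := one_add_expUtilitySum_pos (δ := δ) p α
  have hE := exp_pos (δ j - α * p j)
  rw [logitShare_eq, div_mul_eq_mul_div, one_sub_div hpos.ne', mul_div_assoc', div_div, ← sq]
  gcongr
  nlinarith

theorem exp_div_sq_le_logitShare_mul_one_sub_of_le (hp : ∀ i, 0 ≤ p i) {c : ℝ} (hcα : c ≤ α) :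
    exp (δ j - α * p j) / (1 + expUtilitySum δ p c) ^ 2 ≤
      logitShare δ j p α * (1 - logitShare δ j p α) := by
  refine le_trans ?_ exp_div_sq_le_logitShare_mul_one_sub
  have hD := one_add_expUtilitySum_pos (δ := δ) p α
  gcongr
  exact expUtilitySum_antitone hp hcα

theorem measurable_logitShare : Measurable (logitShare δ j p) := by
  unfold logitShare
  fun_prop

theorem hasDerivAt_logitShare_update :
    HasDerivAt (fun t => logitShare δ j (Function.update p j t) α)
      (-(α * (logitShare δ j p α * (1 - logitShare δ j p α)))) (p j) := by
  set R := ∑ l ∈ Finset.univ.erase j, exp (δ l - α * p l)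
  have hR : 0 ≤ R := Finset.sum_nonneg fun _ _ => (exp_pos _).le
  have hshare : ∀ t, logitShare δ j (Function.update p j t) α =
      exp (δ j - α * t) / (1 + (exp (δ j - α * t) + R)) := fun t => by
    rw [logitShare_eq, expUtilitySum_update, Function.update_self]
  have hE : HasDerivAt (fun t => exp (δ j - α * t)) (-α * exp (δ j - α * p j)) (p j) := by
    simpa [mul_comm] using ((hasDerivAt_id (p j)).const_mul α).const_sub (δ j) |>.exp
  have hden : 1 + (exp (δ j - α * p j) + R) ≠ 0 := by positivity
  have hsp : logitShare δ j p α = exp (δ j - α * p j) / (1 + (exp (δ j - α * p j) + R)) := by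
    simpa using hshare (p j)
  rw [funext hshare]
  refine (hE.div ((hE.add_const R).const_add 1) hden).congr_deriv ?_
  rw [hsp]
  field_simp
  ring

end Logit

section Demand

noncomputable def ownPriceSlope {J : ℕ} (δ : Fin J → ℝ) (μ σ : ℝ) (j : Fin J) (p : Fin J → ℝ) :
    ℝ :=
  ∫ α in Ioi 0, α * (logitShare δ j p α * (1 - logitShare δ j p α)) * lognormalPdf μ σ α

variable {J : ℕ} {δ : Fin J → ℝ} {μ σ : ℝ} {j : Fin J} {p : Fin J → ℝ}

theorem abs_mul_logitShare_mul_one_sub_le {α : ℝ} (hα : 0 ≤ α) (hp : 0 < p j) :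
    |α * (logitShare δ j p α * (1 - logitShare δ j p α))| ≤ exp (δ j) * (p j)⁻¹ := by
  rw [abs_of_nonneg (mul_nonneg hα logitShare_mul_one_sub_nonneg)]
  calc α * (logitShare δ j p α * (1 - logitShare δ j p α))
      ≤ α * exp (δ j - α * p j) := by gcongr; exact logitShare_mul_one_sub_le
    _ = exp (δ j) * (α * exp (-α * p j)) := by rw [sub_eq_add_neg, exp_add]; ring_nf
    _ ≤ exp (δ j) * (p j)⁻¹ := by gcongr; exact mul_exp_neg_mul_le_inv hp

theorem integrableOn_ownPriceSlope (hσ : 0 < σ) (hp : 0 < p j) :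
    IntegrableOn (fun α => α * (logitShare δ j p α * (1 - logitShare δ j p α)) *
      lognormalPdf μ σ α) (Ioi 0) :=
  integrableOn_mul_lognormalPdf hσ
    (measurable_id.mul (measurable_logitShare.mul (measurable_const.sub measurable_logitShare)))
    fun _ hα => abs_mul_logitShare_mul_one_sub_le hα.le hp

theorem hasDerivAt_qLN (hσ : 0 < σ) (M : ℝ) (hp : 0 < p j) :
    HasDerivAt (fun t => qLN δ M μ σ j (Function.update p j t))
      (-(M * ownPriceSlope δ μ σ j p)) (p j) := by
  have key := hasDerivAt_integral_mul_of_norm_deriv_le (integrableOn_lognormalPdf (μ := μ) hσ)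
    (h := fun t α => logitShare δ j (Function.update p j t) α)
    (h' := fun t α => -(α * (logitShare δ j (Function.update p j t) α *
      (1 - logitShare δ j (Function.update p j t) α))))
    (x := p j) (B := 1) (C := exp (δ j) * (p j / 2)⁻¹) (half_pos hp)
    (fun t => measurable_logitShare.aestronglyMeasurable)
    (measurable_id.mul (measurable_logitShare.mul
      (measurable_const.sub measurable_logitShare))).neg.aestronglyMeasurable
    (.of_forall fun α => by
      rw [Real.norm_of_nonneg logitShare_nonneg]; exact logitShare_le_one)
    (.of_forall fun α t _ => by
      simpa using hasDerivAt_logitShare_update (δ := δ) (j := j) (p := Function.update p j t)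
        (α := α))
    (by
      filter_upwards [ae_restrict_mem measurableSet_Ioi] with α hα t ht
      have ht' : p j / 2 ≤ t := by rw [Real.ball_eq_Ioo] at ht; linarith [ht.1]
      rw [norm_neg, Real.norm_eq_abs]
      refine (abs_mul_logitShare_mul_one_sub_le hα.le
        (p := Function.update p j t) (by rw [Function.update_self]; linarith)).trans ?_
      simp only [Function.update_self]
      gcongr)
  simpa [qLN, ownPriceSlope, integral_neg] using key.const_mul M

theorem pd_qLN (hσ : 0 < σ) (M : ℝ) (hp : 0 < p j) :
    pd (qLN δ M μ σ j) j p = -(M * ownPriceSlope δ μ σ j p) :=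
  (hasDerivAt_qLN hσ M hp).deriv

theorem ownPriceSlope_le (hσ : 0 < σ) (hp : 0 < p j) :
    ownPriceSlope δ μ σ j p ≤ exp (δ j) * lnMomentLaplace μ σ (Ioi 0) (p j) := by
  rw [lnMomentLaplace, ← integral_const_mul]
  refine setIntegral_mono_on (integrableOn_ownPriceSlope hσ hp)
    ((integrableOn_lnMomentLaplace hσ hp).const_mul _) measurableSet_Ioi fun α (hα : 0 < α) => ?_
  calc α * (logitShare δ j p α * (1 - logitShare δ j p α)) * lognormalPdf μ σ α
      ≤ α * exp (δ j - α * p j) * lognormalPdf μ σ α := by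
        gcongr
        · exact lognormalPdf_nonneg hσ hα
        · exact logitShare_mul_one_sub_le
    _ = exp (δ j) * (α * exp (-α * p j) * lognormalPdf μ σ α) := by
        rw [show δ j - α * p j = δ j + -α * p j by ring, exp_add]; ring

theorem le_ownPriceSlope (hσ : 0 < σ) (hp : ∀ i, 0 < p i) {c : ℝ} (hc : 0 < c) :
    exp (δ j) * (lnMomentLaplace μ σ (Ioi 0) (p j) - lnMomentLaplace μ σ (Ioc 0 c) (p j)) /
      (1 + expUtilitySum δ p c) ^ 2 ≤ ownPriceSlope δ μ σ j p := by
  have hint := (integrableOn_lnMomentLaplace (μ := μ) hσ (hp j)).mono_set (Ioi_subset_Ioi hc.le)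
  have hslope := integrableOn_ownPriceSlope (δ := δ) (μ := μ) hσ (hp j)
  rw [lnMomentLaplace_Ioi_sub_Ioc hσ hc.le (hp j), lnMomentLaplace, ← integral_const_mul,
    ← integral_div]
  calc ∫ α in Ioi c, exp (δ j) * (α * exp (-α * p j) * lognormalPdf μ σ α) /
        (1 + expUtilitySum δ p c) ^ 2
      ≤ ∫ α in Ioi c, α * (logitShare δ j p α * (1 - logitShare δ j p α)) *
        lognormalPdf μ σ α := by
        refine setIntegral_mono_on ((hint.const_mul _).div_const _)
          (hslope.mono_set (Ioi_subset_Ioi hc.le)) measurableSet_Ioi fun α (hα : c < α) => ?_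
        rw [show exp (δ j) * (α * exp (-α * p j) * lognormalPdf μ σ α) /
            (1 + expUtilitySum δ p c) ^ 2 = α * (exp (δ j - α * p j) /
              (1 + expUtilitySum δ p c) ^ 2) * lognormalPdf μ σ α by
          rw [show δ j - α * p j = δ j + -α * p j by ring, exp_add]; ring]
        have hα0 : 0 < α := hc.trans hα
        gcongr
        · exact lognormalPdf_nonneg hσ hα0
        · exact exp_div_sq_le_logitShare_mul_one_sub_of_le (fun i => (hp i).le) hα.le
    _ ≤ ownPriceSlope δ μ σ j p := by
        refine setIntegral_mono_set hslope ?_ (Ioi_subset_Ioi hc.le).eventuallyLE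
        filter_upwards [ae_restrict_mem measurableSet_Ioi] with α (hα : 0 < α)
        exact mul_nonneg (mul_nonneg hα.le logitShare_mul_one_sub_nonneg)
          (lognormalPdf_nonneg hσ hα)

theorem ownPriceSlope_smul_div_ge (hσ : 0 < σ) (hp : ∀ i, 0 < p i) {T l : ℝ} (hT : 0 < T)
    (hl : 0 < l) :
    ((1 + expUtilitySum δ p T) ^ 2)⁻¹ * (1 - lnMomentLaplace μ σ (Ioc 0 (T / l)) (l * p j) /
        lnMomentLaplace μ σ (Ioi 0) (l * p j)) ≤
      ownPriceSlope δ μ σ j (l • p) / (exp (δ j) * lnMomentLaplace μ σ (Ioi 0) (l * p j)) := by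
  have hlp : ∀ i, 0 < (l • p) i := fun i => mul_pos hl (hp i)
  have key := le_ownPriceSlope (δ := δ) (j := j) (μ := μ) hσ hlp (div_pos hT hl)
  rw [expUtilitySum_smul, div_mul_cancel₀ T hl.ne'] at key
  have hI := lnMomentLaplace_pos (μ := μ) hσ (hlp j)
  have hD := one_add_expUtilitySum_pos (δ := δ) p T
  simp only [Pi.smul_apply, smul_eq_mul] at key hI
  rw [le_div_iff₀ (by positivity)]
  refine le_trans (le_of_eq ?_) key
  field_simp

end Demand

theorem qLN_own_deriv_ray_asymptotics_general {J : ℕ} (M : ℝ) (hM : 0 < M)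
    (δ : Fin J → ℝ) (μ σ : ℝ) (hσ : 0 < σ) (j : Fin J) :
    (∀ p : Fin J → ℝ, (∀ i, 0 < p i) →
      HasDerivAt (fun t => qLN δ M μ σ j (Function.update p j t))
        (-(M * ∫ α in Set.Ioi (0 : ℝ),
            α * (logitShare δ j p α * (1 - logitShare δ j p α)) * lognormalPdf μ σ α))
        (p j)) ∧
    (∀ p : Fin J → ℝ, (∀ i, 0 < p i) →
      Tendsto (fun l : ℝ =>
          (-(pd (qLN δ M μ σ j) j (l • p))) /
            (M * Real.exp (δ j) * (-(deriv (lnLaplace μ σ) (l * p j)))))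
        atTop (nhds 1)) := by
  refine ⟨fun p hp => hasDerivAt_qLN hσ M (hp j), fun p hp => ?_⟩
  have hpj := hp j
  have hratio : ∀ᶠ l in atTop,
      ownPriceSlope δ μ σ j (l • p) / (exp (δ j) * lnMomentLaplace μ σ (Ioi 0) (l * p j)) =
        -pd (qLN δ M μ σ j) j (l • p) / (M * exp (δ j) * -deriv (lnLaplace μ σ) (l * p j)) := by
    filter_upwards [eventually_gt_atTop 0] with l hl
    rw [pd_qLN hσ M (mul_pos hl hpj), deriv_lnLaplace hσ (mul_pos hl hpj), neg_neg, neg_neg,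
      mul_assoc, mul_div_mul_left _ _ hM.ne']
  have hup : ∀ᶠ l in atTop,
      ownPriceSlope δ μ σ j (l • p) / (exp (δ j) * lnMomentLaplace μ σ (Ioi 0) (l * p j)) ≤ 1 := by
    filter_upwards [eventually_gt_atTop 0] with l hl
    have hI := lnMomentLaplace_pos (μ := μ) hσ (mul_pos hl hpj)
    exact div_le_one_of_le₀ (ownPriceSlope_le hσ (mul_pos hl hpj)) (by positivity)
  have hdenom : Tendsto (fun T => ((1 + expUtilitySum δ p T) ^ 2)⁻¹) atTop (𝓝 1) := by
    simpa using (((tendsto_expUtilitySum_atTop (δ := δ) hp).const_add 1).pow 2).inv₀ (by norm_num)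
  have hcut : ∀ᶠ T in atTop, Tendsto (fun l => 1 - lnMomentLaplace μ σ (Ioc 0 (T / l)) (l * p j) /
      lnMomentLaplace μ σ (Ioi 0) (l * p j)) atTop (𝓝 1) := by
    filter_upwards [eventually_gt_atTop 0] with T hT
    simpa using (tendsto_lnMomentLaplace_Ioc_div_mul (μ := μ) hσ hT hpj).const_sub 1
  refine (tendsto_of_le_of_forall_mul_le hup hdenom hcut ?_).congr' hratio
  filter_upwards [eventually_gt_atTop 0] with T hT
  filter_upwards [eventually_gt_atTop 0] with l hl using ownPriceSlope_smul_div_ge hσ hp hT hl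

/-- `q_j` is differentiable in `p_j` on `ℝ_{++}^J` with
`∂_{p_j} q_j(p) = −M ∫ α σ_j(p,α)(1−σ_j(p,α)) f(α) dα`, and along any ray
`(−∂_{p_j} q_j(λp)) / (M e^{δ_j} (−L'(λ p_j))) → 1` as `λ → ∞`. -/
theorem qLN_own_deriv_ray_asymptotics {J : ℕ} (hJ : 1 ≤ J) (M : ℝ) (hM : 0 < M)
    (δ : Fin J → ℝ) (μ σ : ℝ) (hσ : 0 < σ) (j : Fin J) :
    (∀ p : Fin J → ℝ, (∀ i, 0 < p i) →
      HasDerivAt (fun t => qLN δ M μ σ j (Function.update p j t))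
        (-(M * ∫ α in Set.Ioi (0 : ℝ),
            α * (logitShare δ j p α * (1 - logitShare δ j p α)) * lognormalPdf μ σ α))
        (p j)) ∧
    (∀ p : Fin J → ℝ, (∀ i, 0 < p i) →
      Tendsto (fun l : ℝ =>
          (-(pd (qLN δ M μ σ j) j (l • p))) /
            (M * Real.exp (δ j) * (-(deriv (lnLaplace μ σ) (l * p j)))))
        atTop (nhds 1)) :=
  qLN_own_deriv_ray_asymptotics_general M hM δ μ σ hσ j
end

section
/- Let L be the Laplace transform of the log-normal distribution with parameters μ ∈ ℝ, σ > 0, and m(x) = −L'(x)/L(x). Then for every c > 1, as x → ∞: L''(cx)/L(x) = o(m(x)²) and (−L'(cx))(−L'(x))/L(x)² = o(m(x)²). -/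
/-!
Write `G k x = ∫ α^k e^{-αx} p(α) dα` for the log-normal density `p`, so that `L = G 0`,
`-L' = G 1`, `L'' = G 2` and `m = G 1 / G 0`. Since `α e^{-sα} ≤ 1/s`,
`G 2 (c x) ≤ G 1 x / ((c-1) x)`, and splitting at `α = δ` gives
`G 1 (c x) ≤ e^{-(c-1)δx} G 1 x + δ G 0 x`. Both claims therefore follow once `x m(x) → ∞`
(take `δ = m(x) / √(x m(x))`).

That limit comes from the thin lower tail of the log-normal law. A tangent-line bound on
the Gaussian exponent in `log α` gives `P(α ≤ a) ≤ σ² / (μ - log a) · a p(a)`, while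
integrating over `[a, 2a]` gives `x G 1 x ≥ K e^{-2K} a p(a)` for `a = K / x`. Splitting
`G 0 x` at `a` then yields `K G 0 x ≤ 2 x G 1 x` for all large `x`.
-/

open MeasureTheory Real Filter Asymptotics

open Set Topology

noncomputable def laplaceMoment (f : ℝ → ℝ) (k : ℕ) (x : ℝ) : ℝ :=
  ∫ α in Ioi 0, α ^ k * exp (-α * x) * f α

section LaplaceMoment

variable {f : ℝ → ℝ} {B : ℝ}

lemma integrableOn_pow_mul_exp_neg_mul (k : ℕ) {x : ℝ} (hx : 0 < x) :
    IntegrableOn (fun α : ℝ => α ^ k * exp (-α * x)) (Ioi 0) := by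
  refine (integrableOn_rpow_mul_exp_neg_mul_rpow (s := k) (by linarith [k.cast_nonneg (α := ℝ)])
    one_pos hx).congr_fun (fun α _ => ?_) measurableSet_Ioi
  simp only [rpow_natCast, rpow_one, neg_mul, mul_comm x]

lemma integrableOn_laplaceMoment_integrand (hf : Measurable f) (hfB : ∀ α > 0, ‖f α‖ ≤ B)
    (k : ℕ) {x : ℝ} (hx : 0 < x) :
    IntegrableOn (fun α : ℝ => α ^ k * exp (-α * x) * f α) (Ioi 0) :=
  (integrableOn_pow_mul_exp_neg_mul k hx).mul_bdd hf.aestronglyMeasurable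
    ((ae_restrict_iff' measurableSet_Ioi).2 (.of_forall hfB))

lemma hasDerivAt_laplaceMoment (hf : Measurable f) (hfB : ∀ α > 0, ‖f α‖ ≤ B)
    (k : ℕ) {x : ℝ} (hx : 0 < x) :
    HasDerivAt (laplaceMoment f k) (-laplaceMoment f (k + 1) x) x := by
  have hball : ∀ y ∈ Metric.ball x (x / 2), x / 2 < y := fun y hy => by
    rw [Metric.mem_ball, Real.dist_eq, abs_lt] at hy
    linarith
  have hderiv := hasDerivAt_integral_of_dominated_loc_of_deriv_le
    (μ := volume.restrict (Ioi 0))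
    (F := fun y α => α ^ k * exp (-α * y) * f α)
    (F' := fun y α => -(α ^ (k + 1) * exp (-α * y) * f α))
    (bound := fun α => α ^ (k + 1) * exp (-α * (x / 2)) * B)
    (Metric.ball_mem_nhds x (half_pos hx))
    (.of_forall fun y => (by fun_prop : Measurable _).aestronglyMeasurable)
    (integrableOn_laplaceMoment_integrand hf hfB k hx)
    (by fun_prop : Measurable _).aestronglyMeasurable ?_
    ((integrableOn_pow_mul_exp_neg_mul (k + 1) (half_pos hx)).mul_const B) ?_
  · rw [integral_neg] at hderiv
    exact hderiv.2
  · refine (ae_restrict_iff' measurableSet_Ioi).2 (.of_forall fun α (hα : 0 < α) y hy => ?_)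
    rw [norm_neg, norm_mul, norm_mul, norm_of_nonneg (by positivity),
      norm_of_nonneg (exp_pos _).le]
    have := hball y hy
    gcongr ?_ * ?_
    · exact mul_le_mul_of_nonneg_left (exp_le_exp.2 (by nlinarith)) (by positivity)
    · exact hfB α hα
  · refine (ae_restrict_iff' measurableSet_Ioi).2 (.of_forall fun α _ y _ => ?_)
    have := (((hasDerivAt_id y).const_mul (-α)).exp.const_mul (α ^ k)).mul_const (f α)
    exact this.congr_deriv (by simp only [id]; ring)

lemma deriv_laplaceMoment (hf : Measurable f) (hfB : ∀ α > 0, ‖f α‖ ≤ B)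
    (k : ℕ) {x : ℝ} (hx : 0 < x) :
    deriv (laplaceMoment f k) x = -laplaceMoment f (k + 1) x :=
  (hasDerivAt_laplaceMoment hf hfB k hx).deriv

lemma deriv_deriv_laplaceMoment (hf : Measurable f) (hfB : ∀ α > 0, ‖f α‖ ≤ B)
    (k : ℕ) {x : ℝ} (hx : 0 < x) :
    deriv (deriv (laplaceMoment f k)) x = laplaceMoment f (k + 2) x := by
  have : deriv (laplaceMoment f k) =ᶠ[𝓝 x] -laplaceMoment f (k + 1) := by
    filter_upwards [Ioi_mem_nhds hx] with y hy
    exact deriv_laplaceMoment hf hfB k hy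
  rw [this.deriv_eq, deriv.neg, (hasDerivAt_laplaceMoment hf hfB (k + 1) hx).deriv, neg_neg]

lemma laplaceMoment_pos (hf : Measurable f) (hfB : ∀ α > 0, ‖f α‖ ≤ B)
    (hf_pos : ∀ α > 0, 0 < f α) (k : ℕ) {x : ℝ} (hx : 0 < x) :
    0 < laplaceMoment f k x := by
  have hpos : ∀ α ∈ Ioi (0 : ℝ), 0 < α ^ k * exp (-α * x) * f α :=
    fun α (hα : 0 < α) => mul_pos (by positivity) (hf_pos α hα)
  rw [laplaceMoment, setIntegral_pos_iff_support_of_nonneg_ae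
    ((ae_restrict_iff' measurableSet_Ioi).2 (.of_forall fun α hα => (hpos α hα).le))
    (integrableOn_laplaceMoment_integrand hf hfB k hx),
    inter_eq_right.2 fun α hα => Function.mem_support.2 (hpos α hα).ne', Real.volume_Ioi]
  exact ENNReal.zero_lt_top

lemma laplaceMoment_succ_add_le (hf : Measurable f) (hfB : ∀ α > 0, ‖f α‖ ≤ B)
    (hf_nonneg : ∀ α > 0, 0 ≤ f α) (k : ℕ) {x s : ℝ} (hx : 0 < x) (hs : 0 < s) :
    laplaceMoment f (k + 1) (x + s) ≤ laplaceMoment f k x / s := by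
  rw [laplaceMoment, laplaceMoment, ← integral_div]
  refine setIntegral_mono_on (integrableOn_laplaceMoment_integrand hf hfB _ (by positivity))
    ((integrableOn_laplaceMoment_integrand hf hfB k hx).div_const s) measurableSet_Ioi
    fun α (hα : 0 < α) => ?_
  have hαs : α * exp (-α * s) ≤ 1 / s := by
    rw [le_div_iff₀ hs, mul_right_comm, neg_mul, exp_neg, ← div_eq_mul_inv,
      div_le_one (exp_pos _)]
    linarith [add_one_le_exp (α * s)]
  calc α ^ (k + 1) * exp (-α * (x + s)) * f α
      = (α * exp (-α * s)) * (α ^ k * exp (-α * x) * f α) := by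
        rw [mul_add, exp_add]; ring
    _ ≤ 1 / s * (α ^ k * exp (-α * x) * f α) := by
        gcongr
        exact mul_nonneg (by positivity) (hf_nonneg α hα)
    _ = α ^ k * exp (-α * x) * f α / s := by ring

lemma laplaceMoment_succ_add_le_exp_mul_add (hf : Measurable f) (hfB : ∀ α > 0, ‖f α‖ ≤ B)
    (hf_nonneg : ∀ α > 0, 0 ≤ f α) (k : ℕ) {x s δ : ℝ} (hx : 0 < x) (hs : 0 ≤ s)
    (hδ : 0 ≤ δ) :
    laplaceMoment f (k + 1) (x + s)
      ≤ exp (-(s * δ)) * laplaceMoment f (k + 1) x + δ * laplaceMoment f k x := by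
  have hint := integrableOn_laplaceMoment_integrand hf hfB (B := B)
  rw [laplaceMoment, laplaceMoment, laplaceMoment, ← integral_const_mul, ← integral_const_mul,
    ← integral_add ((hint _ hx).const_mul _) ((hint _ hx).const_mul _)]
  refine setIntegral_mono_on (hint _ (by positivity))
    (((hint _ hx).const_mul _).add ((hint _ hx).const_mul _)) measurableSet_Ioi
    fun α (hα : 0 < α) => ?_
  have hsplit : α * exp (-α * s) ≤ exp (-(s * δ)) * α + δ := by
    rcases le_total δ α with hδα | hαδ
    · have : exp (-α * s) ≤ exp (-(s * δ)) := exp_le_exp.2 (by nlinarith)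
      nlinarith [exp_pos (-α * s)]
    · have : exp (-α * s) ≤ 1 := exp_le_one_iff.2 (by nlinarith)
      nlinarith [exp_pos (-(s * δ)), exp_pos (-α * s)]
  have hP : 0 ≤ α ^ k * exp (-α * x) * f α := mul_nonneg (by positivity) (hf_nonneg α hα)
  calc α ^ (k + 1) * exp (-α * (x + s)) * f α
      = (α * exp (-α * s)) * (α ^ k * exp (-α * x) * f α) := by
        rw [mul_add, exp_add]; ring
    _ ≤ (exp (-(s * δ)) * α + δ) * (α ^ k * exp (-α * x) * f α) := by gcongr
    _ = exp (-(s * δ)) * (α ^ (k + 1) * exp (-α * x) * f α)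
          + δ * (α ^ k * exp (-α * x) * f α) := by ring

lemma mul_laplaceMoment_zero_le (hf : Measurable f) (hfB : ∀ α > 0, ‖f α‖ ≤ B)
    (hf_nonneg : ∀ α > 0, 0 ≤ f α) {x K : ℝ} (hx : 0 < x) (hK : 0 < K) :
    K * laplaceMoment f 0 x ≤ K * (∫ α in Ioc 0 (K / x), f α) + x * laplaceMoment f 1 x := by
  have ha : 0 < K / x := by positivity
  have hint := integrableOn_laplaceMoment_integrand hf hfB (B := B)
  have hsplit : laplaceMoment f 0 x = (∫ α in Ioc 0 (K / x), α ^ 0 * exp (-α * x) * f α)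
      + ∫ α in Ioi (K / x), α ^ 0 * exp (-α * x) * f α := by
    rw [laplaceMoment, ← Ioc_union_Ioi_eq_Ioi ha.le, setIntegral_union (Ioc_disjoint_Ioi le_rfl)
      measurableSet_Ioi ((hint 0 hx).mono_set Ioc_subset_Ioi_self)
      ((hint 0 hx).mono_set (Ioi_subset_Ioi ha.le))]
  have hsmall :
      ∫ α in Ioc 0 (K / x), α ^ 0 * exp (-α * x) * f α ≤ ∫ α in Ioc 0 (K / x), f α :=
    setIntegral_mono_on ((hint 0 hx).mono_set Ioc_subset_Ioi_self)
      (Measure.integrableOn_of_bounded measure_Ioc_lt_top.ne hf.aestronglyMeasurable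
        ((ae_restrict_iff' measurableSet_Ioc).2 (.of_forall fun α hα => hfB α hα.1)))
      measurableSet_Ioc fun α hα => by
        have := hf_nonneg α hα.1
        simpa using mul_le_of_le_one_left this (exp_le_one_iff.2 (by nlinarith [hα.1]))
  have hlarge :
      K * ∫ α in Ioi (K / x), α ^ 0 * exp (-α * x) * f α ≤ x * laplaceMoment f 1 x := by
    rw [laplaceMoment, ← integral_const_mul, ← integral_const_mul]
    calc ∫ α in Ioi (K / x), K * (α ^ 0 * exp (-α * x) * f α)
        ≤ ∫ α in Ioi (K / x), x * (α ^ 1 * exp (-α * x) * f α) :=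
          setIntegral_mono_on (((hint 0 hx).mono_set (Ioi_subset_Ioi ha.le)).const_mul _)
            (((hint 1 hx).mono_set (Ioi_subset_Ioi ha.le)).const_mul _) measurableSet_Ioi
            fun α (hα : K / x < α) => by
              have := mul_nonneg (exp_pos (-α * x)).le (hf_nonneg α (ha.trans hα))
              rw [div_lt_iff₀ hx] at hα
              calc K * (α ^ 0 * exp (-α * x) * f α) ≤ (α * x) * (exp (-α * x) * f α) := by
                    rw [pow_zero, one_mul]
                    exact mul_le_mul_of_nonneg_right hα.le this
                _ = x * (α ^ 1 * exp (-α * x) * f α) := by ring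
      _ ≤ ∫ α in Ioi 0, x * (α ^ 1 * exp (-α * x) * f α) :=
          setIntegral_mono_set ((hint 1 hx).const_mul _)
            ((ae_restrict_iff' measurableSet_Ioi).2 (.of_forall fun α (hα : 0 < α) =>
              mul_nonneg hx.le (mul_nonneg (by positivity) (hf_nonneg α hα))))
            (Ioi_subset_Ioi ha.le).eventuallyLE
  rw [hsplit, mul_add]
  linarith [mul_le_mul_of_nonneg_left hsmall hK.le]

lemma mul_exp_mul_le_laplaceMoment_one (hf : Measurable f) (hfB : ∀ α > 0, ‖f α‖ ≤ B)
    (hf_nonneg : ∀ α > 0, 0 ≤ f α) {x a m : ℝ} (hx : 0 < x) (ha : 0 < a)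
    (hm : ∀ α ∈ Icc a (2 * a), m ≤ α * f α) :
    a * exp (-(2 * a * x)) * m ≤ laplaceMoment f 1 x := by
  have hsub : Icc a (2 * a) ⊆ Ioi 0 := fun α hα => ha.trans_le hα.1
  have hint := integrableOn_laplaceMoment_integrand hf hfB 1 hx
  calc a * exp (-(2 * a * x)) * m = exp (-(2 * a * x)) * m * volume.real (Icc a (2 * a)) := by
        rw [Real.volume_real_Icc_of_le (by linarith)]; ring
    _ ≤ ∫ α in Icc a (2 * a), α ^ 1 * exp (-α * x) * f α :=
        setIntegral_ge_of_const_le_real measurableSet_Icc measure_Icc_lt_top.ne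
          (fun α hα => by
            have := hf_nonneg α (hsub hα)
            calc exp (-(2 * a * x)) * m ≤ exp (-(2 * a * x)) * (α * f α) := by
                  gcongr; exact hm α hα
              _ ≤ exp (-α * x) * (α * f α) :=
                  mul_le_mul_of_nonneg_right (exp_le_exp.2 (by nlinarith [hα.2]))
                    (mul_nonneg (hsub hα).le this)
              _ = α ^ 1 * exp (-α * x) * f α := by ring)
          (hint.mono_set hsub)
    _ ≤ laplaceMoment f 1 x :=
        setIntegral_mono_set hint
          ((ae_restrict_iff' measurableSet_Ioi).2 (.of_forall fun α (hα : 0 < α) =>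
            mul_nonneg (by positivity) (hf_nonneg α hα)))
          hsub.eventuallyLE

end LaplaceMoment

lemma isLittleO_of_nonneg_of_le_mul {ι : Type*} {l : Filter ι} {u v h : ι → ℝ}
    (hu : ∀ᶠ x in l, 0 ≤ u x) (huv : ∀ᶠ x in l, u x ≤ h x * v x)
    (hh : Tendsto h l (𝓝 0)) :
    u =o[l] v := by
  refine (IsBigO.of_bound' ?_).trans_isLittleO
    ((((isLittleO_one_iff ℝ).2 hh).mul_isBigO (isBigO_refl v l)).congr_right (by simp))
  filter_upwards [hu, huv] with x hux huvx
  rw [norm_of_nonneg hux]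
  exact huvx.trans (le_abs_self _)

section SemiElasticity

variable {f : ℝ → ℝ} {B : ℝ}

lemma isLittleO_laplaceMoment_two_comp_mul (hf : Measurable f) (hfB : ∀ α > 0, ‖f α‖ ≤ B)
    (hf_pos : ∀ α > 0, 0 < f α)
    (hr : Tendsto (fun x => x * laplaceMoment f 1 x / laplaceMoment f 0 x) atTop atTop)
    {c : ℝ} (hc : 1 < c) :
    (fun x => laplaceMoment f 2 (c * x) / laplaceMoment f 0 x)
      =o[atTop] fun x => (laplaceMoment f 1 x / laplaceMoment f 0 x) ^ 2 := by
  set G := laplaceMoment f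
  refine isLittleO_of_nonneg_of_le_mul (h := fun x => 1 / ((c - 1) * (x * G 1 x / G 0 x)))
    ?_ ?_ (tendsto_const_nhds.div_atTop (hr.const_mul_atTop (by linarith)))
  all_goals filter_upwards [eventually_gt_atTop 0] with x hx
  · exact div_nonneg (laplaceMoment_pos hf hfB hf_pos 2 (by nlinarith)).le
      (laplaceMoment_pos hf hfB hf_pos 0 hx).le
  · have h0 : 0 < G 0 x := laplaceMoment_pos hf hfB hf_pos 0 hx
    have h1 : 0 < G 1 x := laplaceMoment_pos hf hfB hf_pos 1 hx
    have h2 := laplaceMoment_succ_add_le hf hfB (fun α hα => (hf_pos α hα).le) 1 hx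
      (s := (c - 1) * x) (by nlinarith)
    rw [show x + (c - 1) * x = c * x by ring] at h2
    calc G 2 (c * x) / G 0 x ≤ G 1 x / ((c - 1) * x) / G 0 x := by gcongr
      _ = 1 / ((c - 1) * (x * G 1 x / G 0 x)) * (G 1 x / G 0 x) ^ 2 := by
        field_simp

lemma isLittleO_laplaceMoment_one_comp_mul (hf : Measurable f) (hfB : ∀ α > 0, ‖f α‖ ≤ B)
    (hf_pos : ∀ α > 0, 0 < f α)
    (hr : Tendsto (fun x => x * laplaceMoment f 1 x / laplaceMoment f 0 x) atTop atTop)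
    {c : ℝ} (hc : 1 < c) :
    (fun x => laplaceMoment f 1 (c * x) * laplaceMoment f 1 x / laplaceMoment f 0 x ^ 2)
      =o[atTop] fun x => (laplaceMoment f 1 x / laplaceMoment f 0 x) ^ 2 := by
  set G := laplaceMoment f with hG
  set r := fun x => x * G 1 x / G 0 x
  have hsr : Tendsto (fun x => √(r x)) atTop atTop := tendsto_sqrt_atTop.comp hr
  refine isLittleO_of_nonneg_of_le_mul (h := fun x => exp (-((c - 1) * √(r x))) + 1 / √(r x))
    ?_ ?_ ?_
  rotate_right
  · simpa using (tendsto_exp_atBot.comp (tendsto_neg_atTop_atBot.comp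
      (hsr.const_mul_atTop (by linarith)))).add hsr.inv_tendsto_atTop
  all_goals filter_upwards [eventually_gt_atTop 0] with x hx
  · have := laplaceMoment_pos hf hfB hf_pos 1 (by nlinarith : 0 < c * x)
    have := laplaceMoment_pos hf hfB hf_pos 1 hx
    positivity
  · have h0 : 0 < G 0 x := laplaceMoment_pos hf hfB hf_pos 0 hx
    have h1 : 0 < G 1 x := laplaceMoment_pos hf hfB hf_pos 1 hx
    have hsqrt : 0 < √(r x) := sqrt_pos.2 (by positivity)
    -- take `δ = m(x) / √(r x)`, so that `δ x = √(r x)` and `δ G 0 x = G 1 x / √(r x)`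
    have h2 := laplaceMoment_succ_add_le_exp_mul_add hf hfB (fun α hα => (hf_pos α hα).le) 0 hx
      (s := (c - 1) * x) (δ := G 1 x / G 0 x / √(r x)) (by nlinarith) (by positivity)
    rw [zero_add, show x + (c - 1) * x = c * x by ring,
      show (c - 1) * x * (G 1 x / G 0 x / √(r x)) = (c - 1) * (r x / √(r x)) by ring,
      div_sqrt, ← hG] at h2
    calc G 1 (c * x) * G 1 x / G 0 x ^ 2 = G 1 (c * x) / G 1 x * (G 1 x / G 0 x) ^ 2 := by
          field_simp
      _ ≤ (exp (-((c - 1) * √(r x))) + 1 / √(r x)) * (G 1 x / G 0 x) ^ 2 := by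
          gcongr
          rw [div_le_iff₀ h1]
          refine h2.trans_eq ?_
          field_simp

end SemiElasticity

section Lognormal

variable {μ σ : ℝ}

lemma measurable_lognormalPdf : Measurable (lognormalPdf μ σ) := by
  unfold lognormalPdf
  fun_prop

lemma lognormalPdf_pos (hσ : 0 < σ) {α : ℝ} (hα : 0 < α) : 0 < lognormalPdf μ σ α := by
  unfold lognormalPdf
  positivity

lemma lognormalPdf_eq {α : ℝ} (hα : 0 < α) :
    lognormalPdf μ σ α
      = exp (-(log α - μ) ^ 2 / (2 * σ ^ 2) - log α) / (σ * √(2 * π)) := by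
  rw [lognormalPdf, exp_sub, exp_log hα]
  field_simp

lemma mul_lognormalPdf {α : ℝ} (hα : 0 < α) :
    α * lognormalPdf μ σ α = exp (-(log α - μ) ^ 2 / (2 * σ ^ 2)) / (σ * √(2 * π)) := by
  rw [lognormalPdf_eq hα, exp_sub, exp_log hα]
  field_simp

lemma norm_lognormalPdf_le (hσ : 0 < σ) {α : ℝ} (hα : 0 < α) :
    ‖lognormalPdf μ σ α‖ ≤ exp (σ ^ 2 / 2 - μ) / (σ * √(2 * π)) := by
  rw [norm_of_nonneg (lognormalPdf_pos hσ hα).le, lognormalPdf_eq hα]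
  refine div_le_div_of_nonneg_right (exp_le_exp.2 ?_) (by positivity)
  have : σ ^ 2 / 2 - μ - (-(log α - μ) ^ 2 / (2 * σ ^ 2) - log α)
      = (log α - μ + σ ^ 2) ^ 2 / (2 * σ ^ 2) := by
    field_simp
    ring
  nlinarith [div_nonneg (sq_nonneg (log α - μ + σ ^ 2))
    (by positivity : (0 : ℝ) ≤ 2 * σ ^ 2)]

lemma mul_lognormalPdf_le_mul_lognormalPdf (hσ : 0 < σ) {a α : ℝ} (ha : 0 < a)
    (haα : a ≤ α) (hαμ : log α ≤ μ) :
    a * lognormalPdf μ σ a ≤ α * lognormalPdf μ σ α := by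
  rw [mul_lognormalPdf ha, mul_lognormalPdf (ha.trans_le haα)]
  have := log_le_log ha haα
  exact div_le_div_of_nonneg_right (exp_le_exp.2
    (div_le_div_of_nonneg_right (by nlinarith) (by positivity))) (by positivity)

/-- Tangent-line bound for the concave exponent of `α * lognormalPdf μ σ α` in `log α`,
taken at `log α = log a`. -/
lemma lognormalPdf_le_rpow (hσ : 0 < σ) {a α : ℝ} (ha : 0 < a) (hα : 0 < α) :
    lognormalPdf μ σ α ≤ a * lognormalPdf μ σ a * a ^ (-((μ - log a) / σ ^ 2))
      * α ^ ((μ - log a) / σ ^ 2 - 1) := by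
  rw [lognormalPdf_eq hα, mul_lognormalPdf ha, rpow_def_of_pos ha, rpow_def_of_pos hα,
    div_mul_eq_mul_div, div_mul_eq_mul_div, ← exp_add, ← exp_add]
  refine div_le_div_of_nonneg_right (exp_le_exp.2 ?_) (by positivity)
  have : -(log a - μ) ^ 2 / (2 * σ ^ 2) + log a * -((μ - log a) / σ ^ 2)
        + log α * ((μ - log a) / σ ^ 2 - 1) - (-(log α - μ) ^ 2 / (2 * σ ^ 2) - log α)
      = (log α - log a) ^ 2 / (2 * σ ^ 2) := by
    field_simp
    ring
  nlinarith [div_nonneg (sq_nonneg (log α - log a)) (by positivity : (0 : ℝ) ≤ 2 * σ ^ 2)]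

lemma setIntegral_Ioc_lognormalPdf_le (hσ : 0 < σ) {a : ℝ} (ha : 0 < a) (haμ : log a < μ) :
    ∫ α in Ioc 0 a, lognormalPdf μ σ α
      ≤ σ ^ 2 / (μ - log a) * (a * lognormalPdf μ σ a) := by
  set b := (μ - log a) / σ ^ 2
  have hb : 0 < b := div_pos (by linarith) (by positivity)
  calc ∫ α in Ioc 0 a, lognormalPdf μ σ α
      ≤ ∫ α in Ioc 0 a, a * lognormalPdf μ σ a * a ^ (-b) * α ^ (b - 1) :=
        setIntegral_mono_on
          (Measure.integrableOn_of_bounded measure_Ioc_lt_top.ne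
            measurable_lognormalPdf.aestronglyMeasurable
            ((ae_restrict_iff' measurableSet_Ioc).2
              (.of_forall fun α hα => norm_lognormalPdf_le hσ hα.1)))
          ((intervalIntegral.intervalIntegrable_rpow' (by linarith)).1.const_mul _)
          measurableSet_Ioc fun α hα => lognormalPdf_le_rpow hσ ha hα.1
    _ = a * lognormalPdf μ σ a * a ^ (-b) * (a ^ b / b) := by
        rw [integral_const_mul, ← intervalIntegral.integral_of_le ha.le,
          integral_rpow (.inl (by linarith)), sub_add_cancel, zero_rpow hb.ne', sub_zero]
    _ = σ ^ 2 / (μ - log a) * (a * lognormalPdf μ σ a) := by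
        have : μ - log a ≠ 0 := by linarith
        rw [rpow_neg ha.le]
        field_simp
        simp only [b]
        field_simp

lemma mul_setIntegral_Ioc_lognormalPdf_le (hσ : 0 < σ) {x K : ℝ} (hx : 0 < x) (hK : 0 < K)
    (h2 : log (K / x) ≤ μ - log 2) (hσK : log (K / x) ≤ μ - σ ^ 2 * exp (2 * K)) :
    K * ∫ α in Ioc 0 (K / x), lognormalPdf μ σ α
      ≤ x * laplaceMoment (lognormalPdf μ σ) 1 x := by
  set a := K / x
  have ha : 0 < a := by positivity
  have hexp : 0 < σ ^ 2 * exp (2 * K) := by positivity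
  have hcoef : σ ^ 2 / (μ - log a) ≤ exp (-(2 * K)) := by
    rw [div_le_iff₀ (by linarith), exp_neg, ← div_eq_inv_mul, le_div_iff₀ (exp_pos _)]
    linarith
  have hlower := mul_exp_mul_le_laplaceMoment_one measurable_lognormalPdf
    (fun α => norm_lognormalPdf_le hσ) (fun α hα => (lognormalPdf_pos hσ hα).le) hx ha
    (m := a * lognormalPdf μ σ a) fun α hα => mul_lognormalPdf_le_mul_lognormalPdf hσ ha hα.1
      (by linarith [log_le_log (ha.trans_le hα.1) hα.2, log_mul two_ne_zero ha.ne'])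
  have hpa : 0 ≤ a * lognormalPdf μ σ a := (mul_pos ha (lognormalPdf_pos hσ ha)).le
  calc K * ∫ α in Ioc 0 a, lognormalPdf μ σ α
        ≤ K * (exp (-(2 * K)) * (a * lognormalPdf μ σ a)) := by
        gcongr
        exact (setIntegral_Ioc_lognormalPdf_le hσ ha (by linarith)).trans
          (mul_le_mul_of_nonneg_right hcoef hpa)
    _ = x * (a * exp (-(2 * a * x)) * (a * lognormalPdf μ σ a)) := by
        simp only [a]
        field_simp
    _ ≤ x * laplaceMoment (lognormalPdf μ σ) 1 x := by gcongr

lemma tendsto_mul_laplaceMoment_lognormalPdf_div_atTop (hσ : 0 < σ) :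
    Tendsto (fun x => x * laplaceMoment (lognormalPdf μ σ) 1 x
      / laplaceMoment (lognormalPdf μ σ) 0 x) atTop atTop := by
  refine tendsto_atTop.2 fun b => ?_
  set K := 2 * max b 1
  have hK : 0 < K := by positivity
  have hlog : Tendsto (fun x => log (K / x)) atTop atBot := by
    refine (tendsto_atBot_add_const_left atTop (log K)
      (tendsto_neg_atTop_atBot.comp tendsto_log_atTop)).congr' ?_
    filter_upwards [eventually_gt_atTop 0] with x hx
    rw [log_div hK.ne' hx.ne', Function.comp_apply, sub_eq_add_neg]
  filter_upwards [eventually_gt_atTop 0, hlog.eventually (eventually_le_atBot (μ - log 2)),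
    hlog.eventually (eventually_le_atBot (μ - σ ^ 2 * exp (2 * K)))] with x hx h2 hσK
  have hfB : ∀ α > 0, ‖lognormalPdf μ σ α‖ ≤ _ := fun α => norm_lognormalPdf_le hσ
  have h0 := laplaceMoment_pos measurable_lognormalPdf hfB (fun α => lognormalPdf_pos hσ) 0 hx
  have hsplit := mul_laplaceMoment_zero_le measurable_lognormalPdf hfB
    (fun α hα => (lognormalPdf_pos hσ hα).le) hx hK
  have hsmall := mul_setIntegral_Ioc_lognormalPdf_le hσ hx hK h2 hσK
  have hbK : b * laplaceMoment (lognormalPdf μ σ) 0 x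
      ≤ K / 2 * laplaceMoment (lognormalPdf μ σ) 0 x :=
    mul_le_mul_of_nonneg_right (by simp [K]) h0.le
  rw [le_div_iff₀ h0]
  linarith

end Lognormal

lemma lnLaplace_eq_laplaceMoment (μ σ : ℝ) :
    lnLaplace μ σ = laplaceMoment (lognormalPdf μ σ) 0 := by
  funext x
  simp [lnLaplace, laplaceMoment]

/-- For every `c > 1`, as `x → ∞`: `L''(cx)/L(x) = o(m(x)²)` and
`(−L'(cx))(−L'(x))/L(x)² = o(m(x)²)`, where `m(x) = −L'(x)/L(x)`. -/
theorem lognormal_laplace_cross_scales_littleO (μ σ : ℝ) (hσ : 0 < σ) (c : ℝ) (hc : 1 < c) :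
    (fun x : ℝ => deriv (deriv (lnLaplace μ σ)) (c * x) / lnLaplace μ σ x)
        =o[atTop] (fun x : ℝ => (-(deriv (lnLaplace μ σ) x) / lnLaplace μ σ x) ^ 2) ∧
    (fun x : ℝ =>
        (-(deriv (lnLaplace μ σ) (c * x))) * (-(deriv (lnLaplace μ σ) x)) /
          (lnLaplace μ σ x) ^ 2)
        =o[atTop] (fun x : ℝ => (-(deriv (lnLaplace μ σ) x) / lnLaplace μ σ x) ^ 2) := by
  have hf := measurable_lognormalPdf (μ := μ) (σ := σ)
  have hfB : ∀ α > 0, ‖lognormalPdf μ σ α‖ ≤ _ := fun α => norm_lognormalPdf_le hσ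
  have hf_pos : ∀ α > 0, 0 < lognormalPdf μ σ α := fun α => lognormalPdf_pos hσ
  have hr := tendsto_mul_laplaceMoment_lognormalPdf_div_atTop (μ := μ) hσ
  have hsq : (fun x => (laplaceMoment (lognormalPdf μ σ) 1 x
        / laplaceMoment (lognormalPdf μ σ) 0 x) ^ 2)
      =ᶠ[atTop] fun x => (-(deriv (lnLaplace μ σ) x) / lnLaplace μ σ x) ^ 2 := by
    filter_upwards [eventually_gt_atTop 0] with x hx
    rw [lnLaplace_eq_laplaceMoment, deriv_laplaceMoment hf hfB 0 hx, neg_neg]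
  refine ⟨(isLittleO_laplaceMoment_two_comp_mul hf hfB hf_pos hr hc).congr' ?_ hsq,
    (isLittleO_laplaceMoment_one_comp_mul hf hfB hf_pos hr hc).congr' ?_ hsq⟩
  all_goals
    filter_upwards [eventually_gt_atTop 0] with x hx
    have hcx : 0 < c * x := by nlinarith
    rw [lnLaplace_eq_laplaceMoment]
  · rw [deriv_deriv_laplaceMoment hf hfB 0 hcx]
  · rw [deriv_laplaceMoment hf hfB 0 hx, deriv_laplaceMoment hf hfB 0 hcx, neg_neg, neg_neg]
end
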